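/- Let G be a topological group and let μ, ν ∈ Meas(rG) be nonzero and multiplicative, i.e., μ(f·g) = μ(f)·μ(g) and ν(f·g) = ν(f)·ν(g) for all f, g ∈ Ub(rG), where f·g is the pointwise product. Then μ ⋆ ν is nonzero and multiplicative. Moreover, if in addition μ and ν are uniform measures, then μ ⋆ ν is a uniform measure. (Thus the uniform compactification of rG, and its completion, are closed under convolution.) -/

import Mathlib

noncomputable section

open Filter Topology

/-- `f` is a bounded uniformly continuous real-valued function,
i.e. a member of `Ub(X)`. -/
def IsUb {X : Type*} [UniformSpace X] (f : X → ℝ) : Prop :=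
  UniformContinuous f ∧ ∃ C : ℝ, ∀ x, |f x| ≤ C

/-- Supremum norm of a real-valued function. -/
def supNorm {α : Type*} (f : α → ℝ) : ℝ :=
  sSup (Set.range fun x => |f x|)

/-- `μ` is (the restriction to `Ub(X)` of) a norm-continuous linear functional on `Ub(X)`,
i.e. a member of `Meas(X)`.  It is represented as a bare map on all functions;
only its values on `Ub(X)` are relevant. -/
def IsMeas {X : Type*} [UniformSpace X] (μ : (X → ℝ) → ℝ) : Prop :=
  (∀ f g : X → ℝ, IsUb f → IsUb g → μ (f + g) = μ f + μ g) ∧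
  (∀ (c : ℝ) (f : X → ℝ), IsUb f → μ (c • f) = c * μ f) ∧
  (∃ C : ℝ, ∀ f : X → ℝ, IsUb f → (∀ x, |f x| ≤ 1) → |μ f| ≤ C)

/-- The dual norm on `Meas(X)`:  `‖μ‖ = sup {|μ f| : f ∈ Ub(X), ‖f‖ ≤ 1}`. -/
def measNorm {X : Type*} [UniformSpace X] (μ : (X → ℝ) → ℝ) : ℝ :=
  sSup {r : ℝ | ∃ f : X → ℝ, IsUb f ∧ (∀ x, |f x| ≤ 1) ∧ r = |μ f|}

/-- `μ` is a positive functional:  `μ f ≥ 0` whenever `f ∈ Ub(X)` and `f ≥ 0`. -/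
def IsPositive {X : Type*} [UniformSpace X] (μ : (X → ℝ) → ℝ) : Prop :=
  ∀ f : X → ℝ, IsUb f → (∀ x, 0 ≤ f x) → 0 ≤ μ f

/-- `μ` is a *uniform measure*: on every norm-bounded uniformly equicontinuous set
`H ⊆ Ub(X)`, `μ` is continuous for the topology of pointwise convergence. -/
def IsUniformMeasure {X : Type*} [UniformSpace X] (μ : (X → ℝ) → ℝ) : Prop :=
  ∀ H : Set (X → ℝ),
    (∃ C : ℝ, ∀ f ∈ H, ∀ x, |f x| ≤ C) →
    H.UniformEquicontinuous →
    ∀ f₀ ∈ H, ∀ ε : ℝ, 0 < ε →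
      ∃ (K : Finset X) (δ : ℝ), 0 < δ ∧
        ∀ f ∈ H, (∀ x ∈ K, |f x - f₀ x| < δ) → |μ f - μ f₀| < ε

/-- A *semiuniform* function on `X × Y`, i.e. a member of `Ub(X ⋉ Y)` where `X ⋉ Y` is the
semiuniform product: `f` is bounded, the family of sections `x ↦ f (x, y)` (for `y ∈ Y`)
is uniformly equicontinuous on `X`, and every section `y ↦ f (x, y)` is uniformly
continuous on `Y`. -/
def Semiuniform {X Y : Type*} [UniformSpace X] [UniformSpace Y] (f : X × Y → ℝ) : Prop :=
  (∃ C : ℝ, ∀ p, |f p| ≤ C) ∧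
  UniformEquicontinuous (fun y : Y => fun x : X => f (x, y)) ∧
  ∀ x : X, UniformContinuous fun y : Y => f (x, y)

/-- The direct product `μ ⊗ ν`, evaluated at `f : X × Y → ℝ`:
`(μ ⊗ ν)(f) = μ (x ↦ ν (y ↦ f (x, y)))`. -/
def dirProd {X Y : Type*} (μ : (X → ℝ) → ℝ) (ν : (Y → ℝ) → ℝ) (f : X × Y → ℝ) : ℝ :=
  μ fun x => ν fun y => f (x, y)

/-- Convolution: `(μ ⋆ ν)(f) = μ (x ↦ ν (y ↦ f (x · y)))`. -/
def conv {G : Type*} [Mul G] (μ ν : (G → ℝ) → ℝ) : (G → ℝ) → ℝ :=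
  fun f => μ fun x => ν fun y => f (x * y)

/-- The weak-* topology on `Meas(X)`: the topology of pointwise convergence on `Ub(X)`. -/
def weakStarMeas (X : Type*) [UniformSpace X] :
    TopologicalSpace {ν : (X → ℝ) → ℝ // IsMeas ν} :=
  TopologicalSpace.induced
    (fun ν => fun f : {f : X → ℝ // IsUb f} => ν.1 f.1) Pi.topologicalSpace

/-!
Write `T_ν f (x) = ν (y ↦ f (x y))` (`applyTranslates ν f`), so that `μ ⋆ ν = μ ∘ T_ν`.
For the right uniformity, left translations are uniformly continuous and right translations are
uniformly equicontinuous, so the norm-bounded `ν` makes `T_ν` map `Ub(rG)`, and bounded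
uniformly equicontinuous sets, to themselves. Multiplicativity passes from `ν` to `T_ν` and then to `μ ∘ T_ν`, and `1 ↦ 1`.

A uniform measure is one that is pointwise-continuous on bounded uniformly equicontinuous sets
`H`. On such `H`, the coordinate `x` of `T_ν` is `ν` on the set of left translates
`y ↦ f (x y)`, which is again bounded and uniformly equicontinuous; so `T_ν` is pointwise-continuous
on `H` and `μ ⋆ ν = μ ∘ T_ν` is a composite of continuous maps.
-/

section UniformEquicontinuous

variable {ι κ α β γ : Type*} [UniformSpace α] [UniformSpace β] [UniformSpace γ]

theorem UniformEquicontinuous.comp_uniformContinuous {F : ι → β → α}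
    (hF : UniformEquicontinuous F) {u : γ → β} (hu : UniformContinuous u) :
    UniformEquicontinuous fun i => F i ∘ u :=
  fun U hU => hu.eventually (hF U hU)

theorem UniformEquicontinuous.comp_uniformEquicontinuous {F : ι → β → α}
    (hF : UniformEquicontinuous F) {R : κ → γ → β} (hR : UniformEquicontinuous R) :
    UniformEquicontinuous fun p : ι × κ => F p.1 ∘ R p.2 := fun U hU =>
  (hR _ (hF U hU)).mono fun _ h p => h p.2 p.1

theorem Set.uniformEquicontinuous_image_iff {s : Set ι} {Φ : ι → β → α} :
    (Φ '' s).UniformEquicontinuous ↔ UniformEquicontinuous fun i : s => Φ i := by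
  rw [Set.image_eq_range]
  exact uniformEquicontinuous_iff_range.symm

end UniformEquicontinuous

section RightUniformGroup

variable {G : Type*} [UniformSpace G] [Group G] [IsRightUniformGroup G]

theorem uniformContinuous_mul_left_of_isRightUniformGroup (a : G) :
    UniformContinuous (a * ·) := by
  have hconj : Tendsto (fun g : G => a * g * a⁻¹) (𝓝 1) (𝓝 1) := by
    simpa using (show Continuous fun g : G => a * g * a⁻¹ by fun_prop).tendsto 1
  simpa [UniformContinuous, uniformity_eq_comap_mul_inv_nhds_one G, tendsto_comap_iff,
    Function.comp_def, mul_assoc] using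
    hconj.comp (tendsto_comap (f := fun p : G × G => p.2 * p.1⁻¹))

theorem uniformEquicontinuous_mul_right_of_isRightUniformGroup :
    UniformEquicontinuous fun a : G => (· * a) := by
  intro U hU
  rw [uniformity_eq_comap_mul_inv_nhds_one G] at hU ⊢
  obtain ⟨V, hV, hVU⟩ := hU
  filter_upwards [preimage_mem_comap hV] with p hp a
  exact hVU (by simpa [mul_assoc] using hp)

end RightUniformGroup

section PointwiseTopology

variable {X : Type*}

theorem nhds_basis_finset_abs_sub_lt (f₀ : X → ℝ) :
    (𝓝 f₀).HasBasis (fun Kδ : Finset X × ℝ => 0 < Kδ.2)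
      fun Kδ => {f | ∀ x ∈ Kδ.1, |f x - f₀ x| < Kδ.2} := by
  have h : (𝓝 f₀).HasBasis (fun Kδ : Set X × ℝ => Kδ.1.Finite ∧ 0 < Kδ.2)
      fun Kδ => Kδ.1.pi fun x => Metric.ball (f₀ x) Kδ.2 := by
    rw [nhds_pi]
    refine hasBasis_pi_same_index (fun x => Metric.nhds_basis_ball) fun K δ hK hδ => ?_
    have hsmall : ∀ᶠ r in 𝓝[>] (0 : ℝ), 0 < r ∧ ∀ x ∈ K, r < δ x :=
      (eventually_mem_nhdsWithin (s := Set.Ioi 0)).and <| (eventually_all_finite hK).2 fun x hx =>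
        mem_of_superset (Ioo_mem_nhdsGT (hδ x hx)) fun _ hr => hr.2
    obtain ⟨r, hr0, hr⟩ := hsmall.exists
    exact ⟨r, hr0, fun x hx => Metric.ball_subset_ball (hr x hx).le⟩
  refine h.to_hasBasis (fun Kδ hKδ => ⟨(hKδ.1.toFinset, Kδ.2), hKδ.2, fun f hf x hx => ?_⟩)
    fun Kδ hKδ => ⟨(Kδ.1, Kδ.2), ⟨Kδ.1.finite_toSet, hKδ⟩, fun f hf x hx => ?_⟩
  · simpa [Metric.mem_ball, Real.dist_eq] using hf x (by simpa using hx)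
  · simpa [Metric.mem_ball, Real.dist_eq] using hf x hx

theorem continuousWithinAt_iff_finset {φ : (X → ℝ) → ℝ} {H : Set (X → ℝ)}
    {f₀ : X → ℝ} :
    ContinuousWithinAt φ H f₀ ↔ ∀ ε : ℝ, 0 < ε →
      ∃ (K : Finset X) (δ : ℝ), 0 < δ ∧
        ∀ f ∈ H, (∀ x ∈ K, |f x - f₀ x| < δ) → |φ f - φ f₀| < ε := by
  rw [ContinuousWithinAt, (nhdsWithin_hasBasis (nhds_basis_finset_abs_sub_lt f₀) H).tendsto_iff
    Metric.nhds_basis_ball]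
  simp only [Prod.exists, Set.mem_inter_iff, Set.mem_ofPred_eq, Metric.mem_ball, Real.dist_eq]
  exact forall₂_congr fun _ _ => exists₂_congr fun _ _ => and_congr_right fun _ =>
    ⟨fun h f hf hK => h f ⟨hK, hf⟩, fun h f hfK => h f hfK.2 hfK.1⟩

theorem isUniformMeasure_iff [UniformSpace X] {μ : (X → ℝ) → ℝ} :
    IsUniformMeasure μ ↔ ∀ H : Set (X → ℝ), (∃ C : ℝ, ∀ f ∈ H, ∀ x, |f x| ≤ C) →
      H.UniformEquicontinuous → ContinuousOn μ H := by
  simp only [IsUniformMeasure, ContinuousOn, continuousWithinAt_iff_finset]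

end PointwiseTopology

section BoundedUniformlyContinuous

variable {X : Type*} [UniformSpace X] {f g : X → ℝ}

theorem isUb_one : IsUb (1 : X → ℝ) :=
  ⟨uniformContinuous_const, 1, fun _ => by simp⟩

theorem IsUb.smul (hf : IsUb f) (c : ℝ) : IsUb (c • f) := by
  obtain ⟨hfu, C, hC⟩ := hf
  refine ⟨hfu.const_smul c, |c| * C, fun x => ?_⟩
  rw [Pi.smul_apply, smul_eq_mul, abs_mul]
  exact mul_le_mul_of_nonneg_left (hC x) (abs_nonneg c)

theorem IsUb.sub (hf : IsUb f) (hg : IsUb g) : IsUb (f - g) := by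
  obtain ⟨hfu, C, hC⟩ := hf
  obtain ⟨hgu, D, hD⟩ := hg
  exact ⟨hfu.sub hgu, C + D, fun x => (abs_sub _ _).trans (add_le_add (hC x) (hD x))⟩

theorem IsUb.mul (hf : IsUb f) (hg : IsUb g) : IsUb (f * g) := by
  obtain ⟨hfu, C, hC⟩ := hf
  obtain ⟨hgu, D, hD⟩ := hg
  refine ⟨?_, C * D, fun x => ?_⟩
  · -- multiplication is uniformly continuous on the compact square containing the range of `(f, g)`
    have hmaps : Set.MapsTo (fun x => (f x, g x)) Set.univ (Metric.closedBall 0 (max C D)) :=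
      fun x _ => by
        simpa [Prod.norm_def] using max_le_max (hC x) (hD x)
    have hmul : UniformContinuousOn (fun p : ℝ × ℝ => p.1 * p.2) (Metric.closedBall 0 (max C D)) :=
      (isCompact_closedBall _ _).uniformContinuousOn_of_continuous continuous_mul.continuousOn
    exact uniformContinuousOn_univ.1 (hmul.comp (hfu.prodMk hgu).uniformContinuousOn hmaps)
  · rw [Pi.mul_apply, abs_mul]
    exact mul_le_mul (hC x) (hD x) (abs_nonneg _) ((abs_nonneg _).trans (hC x))

theorem IsUb.comp_uniformContinuous {Y : Type*} [UniformSpace Y] (hf : IsUb f) {u : Y → X}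
    (hu : UniformContinuous u) : IsUb (f ∘ u) :=
  ⟨hf.1.comp hu, hf.2.imp fun _ hC y => hC (u y)⟩

end BoundedUniformlyContinuous

section Meas

variable {X : Type*} [UniformSpace X] {ν : (X → ℝ) → ℝ}

theorem IsMeas.map_sub (hν : IsMeas ν) {f g : X → ℝ} (hf : IsUb f) (hg : IsUb g) :
    ν (f - g) = ν f - ν g := by
  rw [sub_eq_add_neg, ← neg_one_smul ℝ g, hν.1 f _ hf (hg.smul (-1)), hν.2.1 (-1) g hg]
  ring

theorem IsMeas.exists_abs_le_mul (hν : IsMeas ν) :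
    ∃ C : ℝ, 0 ≤ C ∧ ∀ (h : X → ℝ) (c : ℝ), IsUb h → 0 < c → (∀ x, |h x| ≤ c) →
      |ν h| ≤ C * c := by
  obtain ⟨C, hC⟩ := hν.2.2
  refine ⟨max C 0, le_max_right _ _, fun h c hh hc hhc => ?_⟩
  have hnormalized : |ν (c⁻¹ • h)| ≤ C := hC _ (hh.smul c⁻¹) fun x => by
    rw [Pi.smul_apply, smul_eq_mul, abs_mul, abs_inv, abs_of_pos hc, inv_mul_le_iff₀ hc, mul_one]
    exact hhc x
  have hscale : ν h = c * ν (c⁻¹ • h) := by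
    rw [← hν.2.1 c _ (hh.smul c⁻¹), smul_inv_smul₀ hc.ne']
  rw [hscale, abs_mul, abs_of_pos hc, mul_comm]
  exact mul_le_mul_of_nonneg_right (hnormalized.trans (le_max_left _ _)) hc.le

theorem IsMeas.uniformEquicontinuous_apply {Y ι : Type*} [UniformSpace Y] (hν : IsMeas ν)
    {F : ι → Y → X → ℝ} (hF : ∀ i y, IsUb (F i y))
    (hFeq : UniformEquicontinuous fun (p : ι × X) y => F p.1 y p.2) :
    UniformEquicontinuous fun i y => ν (F i y) := by
  obtain ⟨C, hC0, hC⟩ := hν.exists_abs_le_mul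
  rw [Metric.uniformEquicontinuous_iff_right] at hFeq ⊢
  intro ε hε
  have hε' : 0 < ε / (C + 1) := by positivity
  filter_upwards [hFeq _ hε'] with yy' hyy' i
  rw [Real.dist_eq, ← hν.map_sub (hF i _) (hF i _)]
  calc |ν (F i yy'.1 - F i yy'.2)| ≤ C * (ε / (C + 1)) :=
        hC _ _ ((hF i _).sub (hF i _)) hε' fun x => (hyy' (i, x)).le
    _ < ε := by
        rw [mul_div_assoc', div_lt_iff₀ (by positivity)]
        nlinarith

theorem map_one_of_map_mul (hν0 : ∃ f : X → ℝ, IsUb f ∧ ν f ≠ 0)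
    (hmul : ∀ f g : X → ℝ, IsUb f → IsUb g → ν (f * g) = ν f * ν g) : ν 1 = 1 := by
  obtain ⟨f, hf, hνf⟩ := hν0
  simpa [hνf] using (hmul f 1 hf isUb_one).symm

end Meas

section Translates

variable {G : Type*} [Mul G] {μ ν : (G → ℝ) → ℝ}

def applyTranslates (ν : (G → ℝ) → ℝ) (f : G → ℝ) : G → ℝ :=
  fun x => ν fun y => f (x * y)

theorem conv_eq_apply_applyTranslates (f : G → ℝ) :
    conv μ ν f = μ (applyTranslates ν f) := rfl

theorem conv_one (hμ1 : μ 1 = 1) (hν1 : ν 1 = 1) : conv μ ν 1 = 1 := by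
  show μ (fun _ => ν 1) = 1
  rw [hν1]
  exact hμ1

end Translates

section Convolution

variable {G : Type*} [UniformSpace G] [Group G] [IsRightUniformGroup G] {μ ν : (G → ℝ) → ℝ}

theorem IsUb.comp_mul_left {f : G → ℝ} (hf : IsUb f) (a : G) : IsUb fun y => f (a * y) :=
  hf.comp_uniformContinuous (uniformContinuous_mul_left_of_isRightUniformGroup a)

theorem IsMeas.uniformEquicontinuous_applyTranslates {ι : Type*} (hν : IsMeas ν)
    {F : ι → G → ℝ} (hF : UniformEquicontinuous F) (hFub : ∀ i, IsUb (F i)) :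
    UniformEquicontinuous fun i => applyTranslates ν (F i) :=
  hν.uniformEquicontinuous_apply (F := fun i x y => F i (x * y))
    (fun i x => (hFub i).comp_mul_left x)
    (hF.comp_uniformEquicontinuous uniformEquicontinuous_mul_right_of_isRightUniformGroup)

theorem IsMeas.exists_forall_abs_applyTranslates_le (hν : IsMeas ν) (B : ℝ) :
    ∃ C : ℝ, ∀ f : G → ℝ, IsUb f → (∀ x, |f x| ≤ B) → ∀ x, |applyTranslates ν f x| ≤ C := by
  obtain ⟨C, -, hC⟩ := hν.exists_abs_le_mul
  exact ⟨C * (|B| + 1), fun f hf hB x => hC _ _ (hf.comp_mul_left x) (by positivity)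
    fun y => (hB _).trans ((le_abs_self B).trans (by linarith))⟩

theorem IsMeas.isUb_applyTranslates (hν : IsMeas ν) {f : G → ℝ} (hf : IsUb f) :
    IsUb (applyTranslates ν f) := by
  refine ⟨?_, ?_⟩
  · exact uniformEquicontinuous_unique.1 <| hν.uniformEquicontinuous_applyTranslates
      (ι := Unit) (uniformEquicontinuous_unique.2 hf.1) fun _ => hf
  · obtain ⟨B, hB⟩ := hf.2
    obtain ⟨C, hC⟩ := hν.exists_forall_abs_applyTranslates_le B
    exact ⟨C, hC f hf hB⟩

theorem applyTranslates_mul (hmul : ∀ f g : G → ℝ, IsUb f → IsUb g → ν (f * g) = ν f * ν g)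
    {f g : G → ℝ} (hf : IsUb f) (hg : IsUb g) :
    applyTranslates ν (f * g) = applyTranslates ν f * applyTranslates ν g :=
  funext fun x => hmul _ _ (hf.comp_mul_left x) (hg.comp_mul_left x)

theorem conv_mul (hν : IsMeas ν) (hmμ : ∀ f g : G → ℝ, IsUb f → IsUb g → μ (f * g) = μ f * μ g)
    (hmν : ∀ f g : G → ℝ, IsUb f → IsUb g → ν (f * g) = ν f * ν g)
    {f g : G → ℝ} (hf : IsUb f) (hg : IsUb g) :
    conv μ ν (f * g) = conv μ ν f * conv μ ν g := by
  simp only [conv_eq_apply_applyTranslates, applyTranslates_mul hmν hf hg]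
  exact hmμ _ _ (hν.isUb_applyTranslates hf) (hν.isUb_applyTranslates hg)

theorem IsUniformMeasure.conv (hUμ : IsUniformMeasure μ) (hν : IsMeas ν)
    (hUν : IsUniformMeasure ν) : IsUniformMeasure (conv μ ν) := by
  rw [isUniformMeasure_iff] at hUμ hUν ⊢
  rintro H ⟨B, hB⟩ hH
  have hHub : ∀ f ∈ H, IsUb f := fun f hf => ⟨hH.uniformContinuous_of_mem hf, B, hB f hf⟩
  have hcont : ContinuousOn (applyTranslates ν) H := by
    refine continuousOn_pi.2 fun x => ?_
    have hνx : ContinuousOn ν ((fun f : G → ℝ => fun y => f (x * y)) '' H) :=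
      hUν _ ⟨B, Set.forall_mem_image.2 fun f hf y => hB f hf _⟩ <|
        Set.uniformEquicontinuous_image_iff.2 <|
          hH.comp_uniformContinuous (uniformContinuous_mul_left_of_isRightUniformGroup x)
    exact hνx.comp (continuous_pi fun y => continuous_apply _).continuousOn (Set.mapsTo_image _ _)
  obtain ⟨C, hC⟩ := hν.exists_forall_abs_applyTranslates_le B
  refine (hUμ _ ⟨C, Set.forall_mem_image.2 fun f hf => hC f (hHub f hf) (hB f hf)⟩ ?_).comp
    hcont (Set.mapsTo_image _ _)
  exact Set.uniformEquicontinuous_image_iff.2 <|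
    hν.uniformEquicontinuous_applyTranslates hH fun f => hHub f f.2

end Convolution

theorem stmt19 {G : Type*} [Group G] [TopologicalSpace G] [IsTopologicalGroup G] :
    letI : UniformSpace G := IsTopologicalGroup.rightUniformSpace G
    ∀ μ ν : (G → ℝ) → ℝ, IsMeas μ → IsMeas ν →
      (∃ f : G → ℝ, IsUb f ∧ μ f ≠ 0) → (∃ f : G → ℝ, IsUb f ∧ ν f ≠ 0) →
      (∀ f g : G → ℝ, IsUb f → IsUb g → μ (f * g) = μ f * μ g) →
      (∀ f g : G → ℝ, IsUb f → IsUb g → ν (f * g) = ν f * ν g) →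
      ((∃ f : G → ℝ, IsUb f ∧ conv μ ν f ≠ 0) ∧
        (∀ f g : G → ℝ, IsUb f → IsUb g →
          conv μ ν (f * g) = conv μ ν f * conv μ ν g) ∧
        (IsUniformMeasure μ → IsUniformMeasure ν → IsUniformMeasure (conv μ ν))) := by
  let : UniformSpace G := IsTopologicalGroup.rightUniformSpace G
  have : IsRightUniformGroup G := ⟨rfl⟩
  intro μ ν _ hν hμ0 hν0 hmμ hmν
  refine ⟨⟨1, isUb_one, ?_⟩, fun f g hf hg => conv_mul hν hmμ hmν hf hg,
    fun hUμ hUν => hUμ.conv hν hUν⟩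
  rw [conv_one (map_one_of_map_mul hμ0 hmμ) (map_one_of_map_mul hν0 hmν)]
  exact one_ne_zero
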